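/- arXiv:1603.08012 — 3 statements merged into one kernel-verified Lean document; each statement's English description precedes it below -/
import Mathlib

section
/- Let f be a complex-valued Schwartz function on ℝ⁴ and let M > 0 be such that for every multi-index w ∈ ℕ⁴ and every p ∈ ℝ⁴ the iterated partial derivative satisfies ‖∂^w f(p)‖ ≤ M^{−|w|} ‖f(p)‖, where |w| = w₁+w₂+w₃+w₄. Then for every k ∈ ℕ, every coordinate direction α ∈ {1,2,3,4} and every x ∈ ℝ⁴ with x_α ≠ 0, one has ‖∫_{ℝ⁴} e^{−i⟨x,p⟩} f(p) dp‖ ≤ (|x_α| · M)^{−k} · ∫_{ℝ⁴} ‖f(p)‖ dp. -/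
/-!
The integral is the Fourier transform `𝓕 f` at `ξ = x / 2π`. Differentiating `k` times in the
direction `e_α` multiplies `𝓕 f ξ` by `(2π i ξ_α)^k = (i x_α)^k`, and the Fourier transform of a
function is bounded by its `L¹` norm, which for `∂_α^k f` is at most `M^{-k} ∫ ‖f‖` by hypothesis.
-/

abbrev E4 := EuclideanSpace ℝ (Fin 4)

/-- Partial derivative in coordinate direction `i`. -/
noncomputable def pd (i : Fin 4) (f : E4 → ℂ) : E4 → ℂ :=
  fun p => fderiv ℝ f p (EuclideanSpace.single i 1)

/-- Iterated partial derivative `∂^w` for a multi-index `w : ℕ⁴`. -/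
noncomputable def pdMulti (w : Fin 4 → ℕ) (f : E4 → ℂ) : E4 → ℂ :=
  (pd 0)^[w 0] ((pd 1)^[w 1] ((pd 2)^[w 2] ((pd 3)^[w 3] f)))

open MeasureTheory FourierTransform LineDeriv Real
open scoped SchwartzMap

theorem Real.integral_exp_neg_inner_smul_eq_fourier {V E : Type*} [NormedAddCommGroup V]
    [InnerProductSpace ℝ V] [FiniteDimensional ℝ V] [MeasurableSpace V] [BorelSpace V]
    [NormedAddCommGroup E] [NormedSpace ℂ E] (f : V → E) (x : V) :
    ∫ p, Complex.exp (-Complex.I * inner ℝ x p) • f p = 𝓕 f ((2 * π)⁻¹ • x) := by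
  rw [Real.fourier_eq']
  congr 1 with p
  rw [real_inner_smul_right, real_inner_comm]
  field_simp
  push_cast
  ring_nf

namespace SchwartzMap

variable {V : Type*} [NormedAddCommGroup V] [InnerProductSpace ℝ V] [FiniteDimensional ℝ V]
  [MeasurableSpace V] [BorelSpace V] {E : Type*} [NormedAddCommGroup E] [NormedSpace ℂ E]

theorem fourier_lineDerivOp_apply (f : 𝓢(V, E)) (m ξ : V) :
    𝓕 (∂_{m} f) ξ = (2 * π * Complex.I * inner ℝ ξ m) • 𝓕 f ξ := by
  have : (inner ℝ · m).HasTemperateGrowth := by fun_prop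
  rw [fourier_lineDerivOp_eq, smul_apply, smulLeftCLM_apply_apply this,
    mul_smul (2 * π * Complex.I), Complex.coe_smul]

theorem norm_fourier_iterate_lineDerivOp_apply (f : 𝓢(V, E)) (m ξ : V) (k : ℕ) :
    ‖𝓕 ((∂_{m})^[k] f) ξ‖ = (2 * π * |inner ℝ ξ m|) ^ k * ‖𝓕 f ξ‖ := by
  induction k with
  | zero => simp
  | succ k ih =>
    rw [Function.iterate_succ_apply', fourier_lineDerivOp_apply, norm_smul, ih, pow_succ]
    simp only [Complex.norm_mul, Complex.norm_ofNat, Complex.norm_real, norm_eq_abs,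
      abs_of_pos pi_pos, Complex.norm_I, mul_one]
    ring

theorem pow_mul_norm_fourier_le (f : 𝓢(V, E)) (m ξ : V) (k : ℕ) {C : ℝ}
    (hC : ∀ p, ‖(∂_{m})^[k] f p‖ ≤ C * ‖f p‖) :
    (2 * π * |inner ℝ ξ m|) ^ k * ‖𝓕 f ξ‖ ≤ C * ∫ p, ‖f p‖ := by
  rw [← norm_fourier_iterate_lineDerivOp_apply, ← integral_const_mul]
  calc ‖𝓕 ((∂_{m})^[k] f) ξ‖ ≤ ∫ p, ‖(∂_{m})^[k] f p‖ :=
        VectorFourier.norm_fourierIntegral_le_integral_norm _ _ _ _ _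
    _ ≤ ∫ p, C * ‖f p‖ :=
        integral_mono ((∂_{m})^[k] f).integrable.norm (f.integrable.norm.const_mul C) hC

end SchwartzMap

theorem pd_coe_eq_lineDerivOp (i : Fin 4) (g : 𝓢(E4, ℂ)) :
    pd i ⇑g = ⇑(∂_{EuclideanSpace.single i (1 : ℝ)} g : 𝓢(E4, ℂ)) := by
  ext p
  rw [SchwartzMap.lineDerivOp_apply_eq_fderiv]
  rfl

theorem iterate_pd_coe_eq_iterate_lineDerivOp (i : Fin 4) (k : ℕ) (g : 𝓢(E4, ℂ)) :
    (pd i)^[k] ⇑g = ⇑((∂_{EuclideanSpace.single i (1 : ℝ)})^[k] g : 𝓢(E4, ℂ)) := by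
  induction k with
  | zero => rfl
  | succ k ih =>
    rw [Function.iterate_succ_apply', Function.iterate_succ_apply', ih, pd_coe_eq_lineDerivOp]

theorem pdMulti_pi_single (i : Fin 4) (k : ℕ) (g : E4 → ℂ) :
    pdMulti (Pi.single i k) g = (pd i)^[k] g := by
  fin_cases i <;> simp [pdMulti]

theorem stmt1_general (f : SchwartzMap E4 ℂ) (M : ℝ)
    (hf : ∀ (w : Fin 4 → ℕ) (p : E4),
      ‖pdMulti w (fun q => f q) p‖ ≤ M ^ (-(∑ i, w i : ℤ)) * ‖f p‖)
    (k : ℕ) (α : Fin 4) (x : E4) (hx : x α ≠ 0) :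
    ‖∫ p : E4, Complex.exp (-Complex.I * ((inner ℝ x p : ℝ) : ℂ)) * f p‖ ≤
      (|x α| * M) ^ (-(k : ℤ)) * ∫ p : E4, ‖f p‖ := by
  have hderiv : ∀ p, ‖(∂_{EuclideanSpace.single α (1 : ℝ)})^[k] f p‖ ≤ M ^ (-(k : ℤ)) * ‖f p‖ := by
    intro p
    simpa [pdMulti_pi_single, iterate_pd_coe_eq_iterate_lineDerivOp, Pi.single_apply] using
      hf (Pi.single α k) p
  have hcoord : 2 * π * |inner ℝ ((2 * π)⁻¹ • x) (EuclideanSpace.single α (1 : ℝ))| = |x α| := by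
    rw [EuclideanSpace.inner_single_right, abs_mul]
    simp only [abs_one, mul_inv_rev, PiLp.smul_apply, smul_eq_mul, ringHom_apply, abs_mul,
      abs_inv, abs_of_pos pi_pos, Nat.abs_ofNat, one_mul]
    field_simp
  have hfourier := Real.integral_exp_neg_inner_smul_eq_fourier (⇑f) x
  simp only [smul_eq_mul] at hfourier
  have hdecay := f.pow_mul_norm_fourier_le _ ((2 * π)⁻¹ • x) k hderiv
  rw [hcoord] at hdecay
  rw [hfourier, mul_zpow, zpow_neg, zpow_natCast, mul_assoc, le_inv_mul_iff₀ (by positivity)]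
  exact hdecay

theorem stmt1 (f : SchwartzMap E4 ℂ) (M : ℝ) (hM : 0 < M)
    (hf : ∀ (w : Fin 4 → ℕ) (p : E4),
      ‖pdMulti w (fun q => f q) p‖ ≤ M ^ (-(∑ i, w i : ℤ)) * ‖f p‖)
    (k : ℕ) (α : Fin 4) (x : E4) (hx : x α ≠ 0) :
    ‖∫ p : E4, Complex.exp (-Complex.I * ((inner ℝ x p : ℝ) : ℂ)) * f p‖ ≤
      (|x α| * M) ^ (-(k : ℤ)) * ∫ p : E4, ‖f p‖ :=
  stmt1_general f M hf k α x hx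
end

section
/- For all natural numbers k, l and every real number m < −1 there exists a polynomial P in two variables with nonnegative real coefficients (depending only on k, l, m) such that for all real numbers a₀, a₁, A, K, L with 0 < a₀ ≤ a₁, A ≥ 0, K ≥ 0 and L > 0, one has ∫_{a₀}^{a₁} max(A,x)^m · (ln₊(K/x))^k · (ln₊(x/L))^l dx ≤ max(A,a₀)^{m+1} · P( ln₊( max(K,A) / max(a₀, min(A,L)) ), ln₊(a₀/L) ). -/
/-- The positive part of the logarithm: `ln₊ x = log (max x 1)`. -/
noncomputable def lnp (x : ℝ) : ℝ := Real.log (max x 1)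

/-!
Put `B = max A a₀` and integrate the (nonnegative) integrand up to `max a₁ B`. On `[a₀, B]` the
weight is at most `B ^ m`, `ln₊ (x / L) ≤ ln₊ (B / L)`, and `∫ ln₊ (K / x) ^ k` over `[a₀, B]` is at
most `B ∑ k!/i! ln₊ (K / B) ^ i`. On `[B, ∞)` the weight is `x ^ m`, `ln₊ (K / x) ≤ ln₊ (K / B)`,
`ln₊ (x / L) ≤ log (x / B) + ln₊ (B / L)`, and
`∫_B^∞ x ^ m log (x / B) ^ i = B ^ (m + 1) i! / s ^ (i + 1)` with `s = -(m + 1) > 0`. Both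
integrals are computed by repeated integration by parts. The resulting bound has nonnegative
coefficients in `u = ln₊ (K / B)` and `v = ln₊ (B / L)`, and `u ≤ X`, `v ≤ X + Y` for the two
arguments `X`, `Y` of the polynomial.
-/

open Real Set intervalIntegral Finset Nat MvPolynomial
open MeasureTheory (volume)
open scoped NNReal

lemma lnp_nonneg (x : ℝ) : 0 ≤ lnp x := log_nonneg (le_max_right _ _)

lemma lnp_le_of_le_max_one {x y : ℝ} (h : x ≤ max y 1) : lnp x ≤ lnp y :=
  log_le_log (one_pos.trans_le (le_max_right _ _)) (max_le h (le_max_right _ _))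

lemma lnp_mono {x y : ℝ} (h : x ≤ y) : lnp x ≤ lnp y :=
  lnp_le_of_le_max_one (h.trans (le_max_left _ _))

lemma lnp_eq_log {x : ℝ} (h : 1 ≤ x) : lnp x = log x := by rw [lnp, max_eq_left h]

lemma lnp_div_anti (c : ℝ) {x y : ℝ} (hy : 0 < y) (hyx : y ≤ x) : lnp (c / x) ≤ lnp (c / y) := by
  rcases le_total 0 c with hc | hc
  · exact lnp_mono (div_le_div_of_nonneg_left hc hy hyx)
  · exact lnp_le_of_le_max_one ((div_nonpos_of_nonpos_of_nonneg hc (hy.le.trans hyx)).trans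
      zero_le_one |>.trans (le_max_right _ _))

lemma lnp_mul_le (x : ℝ) {y : ℝ} (hy : 0 ≤ y) : lnp (x * y) ≤ lnp x + lnp y := by
  have hx1 : 1 ≤ max x 1 := le_max_right _ _
  have hy1 : 1 ≤ max y 1 := le_max_right _ _
  rw [lnp, lnp, lnp, ← log_mul (by positivity) (by positivity)]
  refine log_le_log (by positivity) (max_le ?_ (one_le_mul_of_one_le_of_one_le hx1 hy1))
  exact mul_le_mul (le_max_left _ _) (le_max_left _ _) hy (by positivity)

lemma lnp_div_le (x : ℝ) {y z : ℝ} (hy : 0 < y) (hz : 0 ≤ z) :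
    lnp (x / z) ≤ lnp (x / y) + lnp (y / z) := by
  simpa only [div_mul_div_cancel₀ hy.ne'] using lnp_mul_le (x / y) (div_nonneg hy.le hz)

@[fun_prop]
lemma continuous_lnp : Continuous lnp :=
  (continuous_id.max continuous_const).log fun _ => (one_pos.trans_le (le_max_right _ _)).ne'

lemma intervalIntegrable_of_continuousAt_pos {f : ℝ → ℝ} {a b : ℝ} (ha : 0 < a) (hb : 0 < b)
    (hf : ∀ x, 0 < x → ContinuousAt f x) : IntervalIntegrable f volume a b :=
  ContinuousOn.intervalIntegrable fun x hx =>
    (hf x ((lt_min ha hb).trans_le hx.1)).continuousWithinAt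

lemma hasDerivAt_mul_log_div_pow (c : ℝ) (n : ℕ) {x : ℝ} (hx : 0 < x) (hc : 0 < c) :
    HasDerivAt (fun t => t * log (c / t) ^ (n + 1))
      (log (c / x) ^ (n + 1) - (n + 1) * log (c / x) ^ n) x := by
  have hlog : HasDerivAt (fun t => log (c / t)) (-x⁻¹) x := by
    refine (((hasDerivAt_inv hx.ne').const_mul c).log (by positivity)).congr_deriv ?_
    field_simp
  refine ((hasDerivAt_id x).fun_mul (hlog.fun_pow (n + 1))).congr_deriv ?_
  simp only [id, Nat.add_sub_cancel, Nat.cast_add, Nat.cast_one]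
  field_simp
  ring

lemma integral_log_div_pow_succ (n : ℕ) {a b c : ℝ} (ha : 0 < a) (hb : 0 < b) (hc : 0 < c) :
    (∫ x in a..b, log (c / x) ^ (n + 1)) - (n + 1) * ∫ x in a..b, log (c / x) ^ n =
      b * log (c / b) ^ (n + 1) - a * log (c / a) ^ (n + 1) := by
  have hint (j : ℕ) : IntervalIntegrable (fun x => log (c / x) ^ j) volume a b :=
    intervalIntegrable_of_continuousAt_pos ha hb fun x hx => by
      fun_prop (disch := first | exact hx.ne' | positivity)
  rw [← integral_const_mul, ← integral_sub (hint _) ((hint _).const_mul _)]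
  exact integral_eq_sub_of_hasDerivAt
    (fun x hx => hasDerivAt_mul_log_div_pow c n ((lt_min ha hb).trans_le hx.1) hc)
    ((hint _).sub ((hint _).const_mul _))

lemma integral_log_div_pow_le (k : ℕ) {a b c : ℝ} (ha : 0 < a) (hab : a ≤ b) (hbc : b ≤ c) :
    ∫ x in a..b, log (c / x) ^ k ≤ b * ∑ i ∈ range (k + 1), (k ! / i ! : ℝ) * log (c / b) ^ i := by
  have hb : 0 < b := ha.trans_le hab
  induction k with
  | zero => simp [ha.le]
  | succ k ih =>
    have hlog_a : 0 ≤ log (c / a) := log_nonneg ((one_le_div ha).2 (hab.trans hbc))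
    have hparts := integral_log_div_pow_succ k ha hb (hb.trans_le hbc)
    have hsum : b * ∑ i ∈ range (k + 2), ((k + 1)! / i ! : ℝ) * log (c / b) ^ i =
        b * log (c / b) ^ (k + 1) +
          (k + 1) * (b * ∑ i ∈ range (k + 1), (k ! / i ! : ℝ) * log (c / b) ^ i) := by
      rw [sum_range_succ, div_self (by positivity), one_mul, mul_add, add_comm]
      congr 1
      simp only [mul_sum]
      refine sum_congr rfl fun i _ => ?_
      rw [factorial_succ]
      push_cast
      ring
    rw [hsum]
    nlinarith [mul_le_mul_of_nonneg_left ih (by positivity : (0 : ℝ) ≤ k + 1),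
      mul_nonneg ha.le (pow_nonneg hlog_a (k + 1))]

lemma integral_lnp_div_pow_le (k : ℕ) (c : ℝ) {a b : ℝ} (ha : 0 < a) (hab : a ≤ b) :
    ∫ x in a..b, lnp (c / x) ^ k ≤ b * ∑ i ∈ range (k + 1), (k ! / i ! : ℝ) * lnp (c / b) ^ i := by
  have hb : 0 < b := ha.trans_le hab
  have hc : lnp (c / b) = log (max c b / b) := by
    rw [lnp, ← div_self hb.ne', max_div_div_right hb.le]
  calc ∫ x in a..b, lnp (c / x) ^ k ≤ ∫ x in a..b, log (max c b / x) ^ k := by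
        refine integral_mono_on hab
          (intervalIntegrable_of_continuousAt_pos ha hb fun x hx => by
            fun_prop (disch := exact hx.ne'))
          (intervalIntegrable_of_continuousAt_pos ha hb fun x hx => by
            fun_prop (disch := first | exact hx.ne' | positivity)) fun x hx => ?_
        have hx0 : 0 < x := ha.trans_le hx.1
        gcongr
        · exact lnp_nonneg _
        · refine log_le_log (one_pos.trans_le (le_max_right _ _)) (max_le ?_ ?_)
          · gcongr
            exact le_max_left c b
          · rw [one_le_div hx0]
            exact hx.2.trans (le_max_right c b)
    _ ≤ _ := by
        rw [hc]
        exact integral_log_div_pow_le k ha hab (le_max_right c b)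

lemma hasDerivAt_rpow_mul_log_div_pow (m c : ℝ) (n : ℕ) {x : ℝ} (hx : 0 < x) (hc : 0 < c) :
    HasDerivAt (fun t => t ^ (m + 1) * log (t / c) ^ (n + 1))
      ((m + 1) * (x ^ m * log (x / c) ^ (n + 1)) + (n + 1) * (x ^ m * log (x / c) ^ n)) x := by
  have hlog : HasDerivAt (fun t => log (t / c)) x⁻¹ x := by
    refine (((hasDerivAt_id' x).div_const c).log (by positivity)).congr_deriv ?_
    field_simp
  refine ((hasDerivAt_rpow_const (p := m + 1) (Or.inl hx.ne')).fun_mul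
    (hlog.fun_pow (n + 1))).congr_deriv ?_
  rw [add_sub_cancel_right, rpow_add_one hx.ne']
  simp only [Nat.add_sub_cancel, Nat.cast_add, Nat.cast_one]
  field_simp

lemma integral_rpow_mul_log_div_pow_succ (m : ℝ) (n : ℕ) {a b c : ℝ} (ha : 0 < a) (hb : 0 < b)
    (hc : 0 < c) :
    (m + 1) * (∫ x in a..b, x ^ m * log (x / c) ^ (n + 1)) +
        (n + 1) * ∫ x in a..b, x ^ m * log (x / c) ^ n =
      b ^ (m + 1) * log (b / c) ^ (n + 1) - a ^ (m + 1) * log (a / c) ^ (n + 1) := by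
  have hint (j : ℕ) : IntervalIntegrable (fun x => x ^ m * log (x / c) ^ j) volume a b :=
    intervalIntegrable_of_continuousAt_pos ha hb fun x hx => by
      fun_prop (disch := first | exact hx.ne' | exact Or.inl hx.ne' | positivity)
  rw [← integral_const_mul, ← integral_const_mul,
    ← integral_add ((hint _).const_mul _) ((hint _).const_mul _)]
  exact integral_eq_sub_of_hasDerivAt
    (fun x hx => hasDerivAt_rpow_mul_log_div_pow m c n ((lt_min ha hb).trans_le hx.1) hc)
    (((hint _).const_mul _).add ((hint _).const_mul _))

lemma integral_rpow_mul_log_div_pow_le {m : ℝ} (hm : m < -1) (i : ℕ) {b t : ℝ} (hb : 0 < b)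
    (hbt : b ≤ t) :
    ∫ x in b..t, x ^ m * log (x / b) ^ i ≤ b ^ (m + 1) * i ! / (-(m + 1)) ^ (i + 1) := by
  have hs : 0 < -(m + 1) := by linarith
  have ht : 0 < t := hb.trans_le hbt
  induction i with
  | zero =>
    have h0 : (0 : ℝ) ∉ uIcc b t := fun h => (lt_min hb ht).not_ge h.1
    simp only [pow_zero, mul_one, factorial_zero, cast_one, zero_add, pow_one]
    rw [integral_rpow (Or.inr ⟨hm.ne, h0⟩), div_le_iff_of_neg (by linarith), div_mul_eq_mul_div,
      mul_div_assoc, div_neg, div_self (by linarith)]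
    linarith [rpow_pos_of_pos ht (m + 1)]
  | succ i ih =>
    have hparts := integral_rpow_mul_log_div_pow_succ m i hb ht hb
    have hlog_t : 0 ≤ log (t / b) := log_nonneg ((one_le_div hb).2 hbt)
    have hboundary : 0 ≤ t ^ (m + 1) * log (t / b) ^ (i + 1) := by positivity
    rw [div_self hb.ne', log_one, zero_pow (succ_ne_zero i), mul_zero, sub_zero] at hparts
    have hscaled : -(m + 1) * ∫ x in b..t, x ^ m * log (x / b) ^ (i + 1) ≤
        -(m + 1) * (b ^ (m + 1) * (i + 1)! / (-(m + 1)) ^ (i + 1 + 1)) := by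
      have : -(m + 1) * (b ^ (m + 1) * (i + 1)! / (-(m + 1)) ^ (i + 1 + 1)) =
          (i + 1) * (b ^ (m + 1) * i ! / (-(m + 1)) ^ (i + 1)) := by
        rw [factorial_succ]
        push_cast
        field_simp
        ring
      rw [this]
      nlinarith [mul_le_mul_of_nonneg_left ih (by positivity : (0 : ℝ) ≤ i + 1)]
    exact le_of_mul_le_mul_left hscaled hs

lemma integral_rpow_mul_log_div_add_pow_le {m : ℝ} (hm : m < -1) (l : ℕ) {b t c : ℝ} (hb : 0 < b)
    (hbt : b ≤ t) (hc : 0 ≤ c) :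
    ∫ x in b..t, x ^ m * (log (x / b) + c) ^ l ≤
      b ^ (m + 1) *
        ∑ i ∈ range (l + 1), (l.choose i * i ! / (-(m + 1)) ^ (i + 1)) * c ^ (l - i) := by
  have ht : 0 < t := hb.trans_le hbt
  have hint (i : ℕ) : IntervalIntegrable (fun x => x ^ m * log (x / b) ^ i) volume b t :=
    intervalIntegrable_of_continuousAt_pos hb ht fun x hx => by
      fun_prop (disch := first | exact hx.ne' | exact Or.inl hx.ne' | positivity)
  calc ∫ x in b..t, x ^ m * (log (x / b) + c) ^ l
      = ∫ x in b..t, ∑ i ∈ range (l + 1), c ^ (l - i) * l.choose i * (x ^ m * log (x / b) ^ i) := by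
        simp only [add_pow, mul_sum]
        exact integral_congr fun x _ => sum_congr rfl fun i _ => by ring
    _ = ∑ i ∈ range (l + 1), c ^ (l - i) * l.choose i * ∫ x in b..t, x ^ m * log (x / b) ^ i := by
        rw [integral_finsetSum fun i _ => (hint i).const_mul _]
        simp only [integral_const_mul]
    _ ≤ ∑ i ∈ range (l + 1),
          c ^ (l - i) * l.choose i * (b ^ (m + 1) * i ! / (-(m + 1)) ^ (i + 1)) := by
        gcongr with i
        exact integral_rpow_mul_log_div_pow_le hm i hb hbt
    _ = _ := by
        rw [mul_sum]
        exact sum_congr rfl fun i _ => by ring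

noncomputable def logBound (k l : ℕ) (s u v : ℝ) : ℝ :=
  v ^ l * ∑ i ∈ range (k + 1), (k ! / i ! : ℝ) * u ^ i +
    u ^ k * ∑ i ∈ range (l + 1), (l.choose i * i ! / s ^ (i + 1)) * v ^ (l - i)

lemma logBound_mono (k l : ℕ) {s u u' v v' : ℝ} (hs : 0 ≤ s) (hu : 0 ≤ u) (hv : 0 ≤ v)
    (huu' : u ≤ u') (hvv' : v ≤ v') : logBound k l s u v ≤ logBound k l s u' v' := by
  have hu' : 0 ≤ u' := hu.trans huu'
  have hv' : 0 ≤ v' := hv.trans hvv'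
  unfold logBound
  gcongr

section

variable (k l : ℕ) (m A K : ℝ) {L : ℝ}

lemma intervalIntegrable_rpow_max_mul_lnp {a b : ℝ} (ha : 0 < a) (hb : 0 < b) :
    IntervalIntegrable (fun x => max A x ^ m * lnp (K / x) ^ k * lnp (x / L) ^ l) volume a b :=
  intervalIntegrable_of_continuousAt_pos ha hb fun x hx => by
    fun_prop (disch := first | exact hx.ne' | exact Or.inl (hx.trans_le (le_max_right _ _)).ne')

variable {m}

lemma integral_rpow_max_mul_lnp_initial_le (hm : m ≤ 0) {a₀ : ℝ} (h0 : 0 < a₀) (hL : 0 ≤ L) :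
    ∫ x in a₀..max A a₀, max A x ^ m * lnp (K / x) ^ k * lnp (x / L) ^ l ≤
      max A a₀ ^ (m + 1) *
        (lnp (max A a₀ / L) ^ l *
          ∑ i ∈ range (k + 1), (k ! / i ! : ℝ) * lnp (K / max A a₀) ^ i) := by
  set B := max A a₀
  have hB0 : a₀ ≤ B := le_max_right _ _
  have hB : 0 < B := h0.trans_le hB0
  calc ∫ x in a₀..B, max A x ^ m * lnp (K / x) ^ k * lnp (x / L) ^ l
      ≤ ∫ x in a₀..B, B ^ m * lnp (B / L) ^ l * lnp (K / x) ^ k := by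
        refine integral_mono_on hB0 (intervalIntegrable_rpow_max_mul_lnp k l m A K h0 hB)
          (intervalIntegrable_of_continuousAt_pos h0 hB fun x hx => by
            fun_prop (disch := exact hx.ne')) fun x hx => ?_
        rw [mul_right_comm]
        refine mul_le_mul_of_nonneg_right (mul_le_mul ?_ ?_ (pow_nonneg (lnp_nonneg _) l)
          (rpow_nonneg hB.le m)) (pow_nonneg (lnp_nonneg _) k)
        · exact rpow_le_rpow_of_nonpos hB (max_le_max le_rfl hx.1) hm
        · exact pow_le_pow_left₀ (lnp_nonneg _) (lnp_mono (by gcongr; exact hx.2)) l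
    _ = B ^ m * lnp (B / L) ^ l * ∫ x in a₀..B, lnp (K / x) ^ k := integral_const_mul _ _
    _ ≤ B ^ m * lnp (B / L) ^ l * (B * ∑ i ∈ range (k + 1), (k ! / i ! : ℝ) * lnp (K / B) ^ i) :=
        mul_le_mul_of_nonneg_left (integral_lnp_div_pow_le k K h0 hB0)
          (mul_nonneg (rpow_nonneg hB.le m) (pow_nonneg (lnp_nonneg _) l))
    _ = _ := by
        rw [rpow_add_one hB.ne']
        ring

lemma integral_rpow_max_mul_lnp_tail_le (hm : m < -1) {b t : ℝ} (hb : 0 < b) (hbt : b ≤ t)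
    (hL : 0 ≤ L) :
    ∫ x in b..t, max A x ^ m * lnp (K / x) ^ k * lnp (x / L) ^ l ≤
      b ^ (m + 1) * (lnp (K / b) ^ k * ∑ i ∈ range (l + 1),
        (l.choose i * i ! / (-(m + 1)) ^ (i + 1)) * lnp (b / L) ^ (l - i)) := by
  have ht : 0 < t := hb.trans_le hbt
  calc ∫ x in b..t, max A x ^ m * lnp (K / x) ^ k * lnp (x / L) ^ l
      ≤ ∫ x in b..t, lnp (K / b) ^ k * (x ^ m * (log (x / b) + lnp (b / L)) ^ l) := by
        refine integral_mono_on hbt (intervalIntegrable_rpow_max_mul_lnp k l m A K hb ht)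
          (intervalIntegrable_of_continuousAt_pos hb ht fun x hx => by
            fun_prop (disch := first | exact hx.ne' | exact Or.inl hx.ne' | positivity))
          fun x hx => ?_
        have hx0 : 0 < x := hb.trans_le hx.1
        have hlnp : lnp (x / L) ≤ log (x / b) + lnp (b / L) := by
          rw [← lnp_eq_log ((one_le_div hb).2 hx.1)]
          exact lnp_div_le x hb hL
        rw [mul_left_comm, ← mul_assoc]
        refine mul_le_mul (mul_le_mul ?_ ?_ (pow_nonneg (lnp_nonneg _) k) (rpow_nonneg hx0.le m))
          (pow_le_pow_left₀ (lnp_nonneg _) hlnp l) (pow_nonneg (lnp_nonneg _) l) ?_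
        · exact rpow_le_rpow_of_nonpos hx0 (le_max_right A x) (by linarith)
        · exact pow_le_pow_left₀ (lnp_nonneg _) (lnp_div_anti K hb hx.1) k
        · exact mul_nonneg (rpow_nonneg hx0.le m) (pow_nonneg (lnp_nonneg _) k)
    _ = lnp (K / b) ^ k * ∫ x in b..t, x ^ m * (log (x / b) + lnp (b / L)) ^ l :=
        integral_const_mul _ _
    _ ≤ _ := by
        rw [mul_left_comm]
        exact mul_le_mul_of_nonneg_left
          (integral_rpow_mul_log_div_add_pow_le hm l hb hbt (lnp_nonneg _))
          (pow_nonneg (lnp_nonneg _) k)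

lemma integral_rpow_max_mul_lnp_le_logBound (hm : m < -1) {a₀ a₁ : ℝ} (h0 : 0 < a₀) (h01 : a₀ ≤ a₁)
    (hL : 0 ≤ L) :
    ∫ x in a₀..a₁, max A x ^ m * lnp (K / x) ^ k * lnp (x / L) ^ l ≤
      max A a₀ ^ (m + 1) * logBound k l (-(m + 1)) (lnp (K / max A a₀)) (lnp (max A a₀ / L)) := by
  set B := max A a₀
  set T := max a₁ B
  have hB0 : a₀ ≤ B := le_max_right _ _
  have hB : 0 < B := h0.trans_le hB0
  have hT : 0 < T := hB.trans_le (le_max_right _ _)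
  calc ∫ x in a₀..a₁, max A x ^ m * lnp (K / x) ^ k * lnp (x / L) ^ l
      ≤ ∫ x in a₀..T, max A x ^ m * lnp (K / x) ^ k * lnp (x / L) ^ l := by
        refine integral_mono_interval le_rfl h01 (le_max_left _ _)
          (MeasureTheory.ae_restrict_of_forall_mem measurableSet_Ioc fun x hx => ?_)
          (intervalIntegrable_rpow_max_mul_lnp k l m A K h0 hT)
        have hx0 : 0 < x := h0.trans hx.1
        exact mul_nonneg (mul_nonneg (rpow_nonneg (hx0.le.trans (le_max_right _ _)) m)
          (pow_nonneg (lnp_nonneg _) k)) (pow_nonneg (lnp_nonneg _) l)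
    _ = (∫ x in a₀..B, max A x ^ m * lnp (K / x) ^ k * lnp (x / L) ^ l) +
          ∫ x in B..T, max A x ^ m * lnp (K / x) ^ k * lnp (x / L) ^ l :=
        (integral_add_adjacent_intervals (intervalIntegrable_rpow_max_mul_lnp k l m A K h0 hB)
          (intervalIntegrable_rpow_max_mul_lnp k l m A K hB hT)).symm
    _ ≤ _ := by
        rw [logBound, mul_add]
        exact add_le_add (integral_rpow_max_mul_lnp_initial_le k l A K (by linarith) h0 hL)
          (integral_rpow_max_mul_lnp_tail_le k l A K hm hB (le_max_right _ _) hL)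

end

lemma lnp_div_max_le (A K L : ℝ) {a₀ : ℝ} (h0 : 0 < a₀) :
    lnp (K / max A a₀) ≤ lnp (max K A / max a₀ (min A L)) := by
  have hD : 0 < max a₀ (min A L) := h0.trans_le (le_max_left _ _)
  calc lnp (K / max A a₀) ≤ lnp (K / max a₀ (min A L)) := lnp_div_anti K hD
        (max_le (le_max_right _ _) ((min_le_left _ _).trans (le_max_left _ _)))
    _ ≤ _ := lnp_mono (div_le_div_of_nonneg_right (le_max_left K A) hD.le)

lemma lnp_max_div_le (A K : ℝ) {a₀ L : ℝ} (h0 : 0 < a₀) (hL : 0 ≤ L) :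
    lnp (max A a₀ / L) ≤ lnp (max K A / max a₀ (min A L)) + lnp (a₀ / L) := by
  have hD : 0 < max a₀ (min A L) := h0.trans_le (le_max_left _ _)
  calc lnp (max A a₀ / L)
      ≤ lnp (max A a₀ / max a₀ (min A L)) + lnp (max a₀ (min A L) / L) := lnp_div_le _ hD hL
    _ ≤ _ := by
        gcongr <;> refine lnp_le_of_le_max_one ?_
        · rw [← max_div_div_right hD.le]
          exact max_le_max (div_le_div_of_nonneg_right (le_max_right K A) hD.le)
            ((div_le_one hD).2 (le_max_left _ _))
        · rw [← max_div_div_right hL]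
          exact max_le_max le_rfl (div_le_one_of_le₀ (min_le_right _ _) hL)

noncomputable def boundPoly (k l : ℕ) (s : ℝ≥0) : MvPolynomial (Fin 2) ℝ≥0 :=
  (X 0 + X 1) ^ l * ∑ i ∈ range (k + 1), C (k ! / i ! : ℝ≥0) * X 0 ^ i +
    X 0 ^ k * ∑ i ∈ range (l + 1), C (l.choose i * i ! / s ^ (i + 1)) * (X 0 + X 1) ^ (l - i)

lemma eval_map_boundPoly (k l : ℕ) (s : ℝ≥0) (x y : ℝ) :
    eval ![x, y] (map (algebraMap ℝ≥0 ℝ) (boundPoly k l s)) = logBound k l s x (x + y) := by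
  simp [boundPoly, logBound]

theorem stmt3 (k l : ℕ) (m : ℝ) (hm : m < -1) :
    ∃ P : MvPolynomial (Fin 2) ℝ, (∀ d, 0 ≤ P.coeff d) ∧
      ∀ a₀ a₁ A K L : ℝ, 0 < a₀ → a₀ ≤ a₁ → 0 ≤ A → 0 ≤ K → 0 < L →
        ∫ x in a₀..a₁, max A x ^ m * lnp (K / x) ^ k * lnp (x / L) ^ l ≤
          max A a₀ ^ (m + 1) *
            MvPolynomial.eval ![lnp (max K A / max a₀ (min A L)), lnp (a₀ / L)] P := by
  have hs : 0 ≤ -(m + 1) := by linarith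
  refine ⟨map (algebraMap ℝ≥0 ℝ) (boundPoly k l (-(m + 1)).toNNReal),
    fun d => by simp only [coeff_map]; exact NNReal.coe_nonneg _, ?_⟩
  intro a₀ a₁ A K L h0 h01 _ _ hL
  rw [eval_map_boundPoly, Real.coe_toNNReal _ hs]
  refine (integral_rpow_max_mul_lnp_le_logBound k l A K hm h0 h01 hL.le).trans ?_
  exact mul_le_mul_of_nonneg_left
    (logBound_mono k l hs (lnp_nonneg _) (lnp_nonneg _) (lnp_div_max_le A K L h0)
      (lnp_max_div_le A K h0 hL.le))
    (rpow_nonneg (h0.le.trans (le_max_right _ _)) _)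
end

section
/- Let n ∈ ℕ, let m : Fin n → ℝ, let α > 0, and let f : ℝ⁴ → ℝ be a nonnegative measurable function such that ∫_{ℝ⁴} e^{−α'‖x‖²} f(x) dx < ∞ for every α' > 0. Then there exists a constant c > 0 (depending only on n, m, α and f) such that for all vectors a : Fin n → ℝ⁴ and all reals β : Fin n → ℝ with β_i ≥ 1 for every i, one has ∫_{ℝ⁴} e^{−α‖x‖²} f(x) ∏_{i=1}^n max(‖x + a_i‖, β_i)^{m_i} dx ≤ c · ∏_{i=1}^n max(‖a_i‖, β_i)^{m_i}. -/
/-! Since `1 ≤ β i`, the weights `max ‖·‖ (β i)` at `x + a i` and at `a i` differ at most by the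
factor `1 + ‖x‖` in either direction (Peetre's inequality), so the product is bounded by
`(1 + ‖x‖) ^ ∑ |m i|` times the right-hand product. This polynomial factor is absorbed by half of
the Gaussian, `(1 + r) ^ M ≤ e ^ (M r) ≤ e ^ (M² / 2α) e ^ (α r² / 2)`, and the remaining
integral of `e ^ (-α ‖x‖² / 2) f` is finite by hypothesis. -/

open MeasureTheory

theorem Real.rpow_le_rpow_abs_mul_rpow {u v t : ℝ} (hu : 0 < u) (hv : 0 < v)
    (huv : u ≤ t * v) (hvu : v ≤ t * u) (m : ℝ) : u ^ m ≤ t ^ |m| * v ^ m := by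
  have ht : 0 < t := pos_of_mul_pos_left (hu.trans_le huv) hv.le
  have hlog : |Real.log u - Real.log v| ≤ Real.log t := by
    rw [abs_sub_le_iff, sub_le_iff_le_add, sub_le_iff_le_add, ← Real.log_mul ht.ne' hv.ne',
      ← Real.log_mul ht.ne' hu.ne']
    exact ⟨Real.log_le_log hu huv, Real.log_le_log hv hvu⟩
  rw [Real.rpow_def_of_pos hu, Real.rpow_def_of_pos ht, Real.rpow_def_of_pos hv, ← Real.exp_add]
  refine Real.exp_le_exp.mpr ?_
  have : m * (Real.log u - Real.log v) ≤ |m| * Real.log t :=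
    (le_abs_self _).trans (abs_mul m _ ▸ mul_le_mul_of_nonneg_left hlog (abs_nonneg m))
  linarith

section
variable {E : Type*} [SeminormedAddCommGroup E]

theorem max_norm_add_le_one_add_norm_mul {b : ℝ} (hb : 1 ≤ b) (x a : E) :
    max ‖x + a‖ b ≤ (1 + ‖x‖) * max ‖a‖ b := by
  have hx := norm_nonneg x
  have h1 : 1 ≤ max ‖a‖ b := le_max_of_le_right hb
  refine max_le ?_ ?_
  · nlinarith [norm_add_le x a, le_max_left ‖a‖ b]
  · nlinarith [le_max_right ‖a‖ b]

theorem max_norm_add_rpow_le {b : ℝ} (hb : 1 ≤ b) (x a : E) (m : ℝ) :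
    max ‖x + a‖ b ^ m ≤ (1 + ‖x‖) ^ |m| * max ‖a‖ b ^ m := by
  have hb0 : (0 : ℝ) < b := one_pos.trans_le hb
  refine Real.rpow_le_rpow_abs_mul_rpow (hb0.trans_le (le_max_right _ _))
    (hb0.trans_le (le_max_right _ _)) (max_norm_add_le_one_add_norm_mul hb x a) ?_ m
  simpa using max_norm_add_le_one_add_norm_mul hb (-x) (x + a)

theorem prod_max_norm_add_rpow_le {ι : Type*} (s : Finset ι) {β : ι → ℝ} (hβ : ∀ i, 1 ≤ β i)
    (x : E) (a : ι → E) (m : ι → ℝ) :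
    ∏ i ∈ s, max ‖x + a i‖ (β i) ^ m i ≤
      (1 + ‖x‖) ^ (∑ i ∈ s, |m i|) * ∏ i ∈ s, max ‖a i‖ (β i) ^ m i := by
  rw [Real.rpow_sum_of_pos (by positivity), ← Finset.prod_mul_distrib]
  exact Finset.prod_le_prod (fun i _ => by positivity)
    (fun i _ => max_norm_add_rpow_le (hβ i) x (a i) (m i))

end

theorem exp_neg_mul_sq_mul_one_add_rpow_le {α : ℝ} (hα : 0 < α) {M r : ℝ} (hM : 0 ≤ M)
    (hr : 0 ≤ r) :
    Real.exp (-α * r ^ 2) * (1 + r) ^ M ≤ Real.exp (M ^ 2 / (2 * α)) * Real.exp (-(α / 2) * r ^ 2) := by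
  have hpow : (1 + r) ^ M ≤ Real.exp (M * r) := by
    rw [mul_comm, Real.exp_mul]
    exact Real.rpow_le_rpow (by positivity) (by linarith [Real.add_one_le_exp r]) hM
  have hamgm : M * r ≤ M ^ 2 / (2 * α) + α / 2 * r ^ 2 := by
    rw [div_add' _ _ _ (by positivity), le_div_iff₀ (by positivity)]
    nlinarith [sq_nonneg (α * r - M)]
  calc Real.exp (-α * r ^ 2) * (1 + r) ^ M ≤ Real.exp (-α * r ^ 2) * Real.exp (M * r) := by
        gcongr
    _ ≤ Real.exp (-α * r ^ 2) * Real.exp (M ^ 2 / (2 * α) + α / 2 * r ^ 2) := by gcongr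
    _ = Real.exp (M ^ 2 / (2 * α)) * Real.exp (-(α / 2) * r ^ 2) := by
        rw [← Real.exp_add, ← Real.exp_add]; ring_nf

theorem stmt6_general (n : ℕ) (m : Fin n → ℝ) (α : ℝ) (hα : 0 < α) (f : E4 → ℝ)
    (hfnn : ∀ x, 0 ≤ f x)
    (hfint : ∀ α' : ℝ, 0 < α' →
      Integrable fun x : E4 => Real.exp (-α' * ‖x‖ ^ 2) * f x) :
    ∃ c > 0, ∀ (a : Fin n → E4) (β : Fin n → ℝ), (∀ i, 1 ≤ β i) →
      ∫ x : E4, Real.exp (-α * ‖x‖ ^ 2) * f x * ∏ i, max ‖x + a i‖ (β i) ^ m i ≤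
        c * ∏ i, max ‖a i‖ (β i) ^ m i := by
  set M := ∑ i, |m i|
  set K := Real.exp (M ^ 2 / (2 * α))
  set g : E4 → ℝ := fun x => Real.exp (-(α / 2) * ‖x‖ ^ 2) * f x
  set I := ∫ x, g x
  have hI : 0 ≤ I := integral_nonneg fun x => mul_nonneg (Real.exp_pos _).le (hfnn x)
  refine ⟨K * I + 1, by positivity, fun a β hβ => ?_⟩
  set P := ∏ i, max ‖a i‖ (β i) ^ m i
  have hP : 0 ≤ P := by positivity
  have hpt : ∀ x, Real.exp (-α * ‖x‖ ^ 2) * f x * ∏ i, max ‖x + a i‖ (β i) ^ m i ≤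
      K * P * g x := fun x =>
    calc _ ≤ Real.exp (-α * ‖x‖ ^ 2) * f x * ((1 + ‖x‖) ^ M * P) := by
          gcongr
          · exact mul_nonneg (Real.exp_pos _).le (hfnn x)
          · exact prod_max_norm_add_rpow_le _ hβ x a m
      _ = Real.exp (-α * ‖x‖ ^ 2) * (1 + ‖x‖) ^ M * (f x * P) := by ring
      _ ≤ K * Real.exp (-(α / 2) * ‖x‖ ^ 2) * (f x * P) := by
          exact mul_le_mul_of_nonneg_right
            (exp_neg_mul_sq_mul_one_add_rpow_le hα (by positivity) (norm_nonneg x))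
            (mul_nonneg (hfnn x) hP)
      _ = K * P * g x := by ring
  calc _ ≤ ∫ x, K * P * g x := integral_mono_of_nonneg
        (.of_forall fun x => by have := hfnn x; positivity)
        ((hfint (α / 2) (by positivity)).const_mul _) (.of_forall hpt)
    _ = K * P * I := integral_const_mul _ _
    _ ≤ (K * I + 1) * P := by
        rw [add_mul, one_mul, mul_right_comm]; exact le_add_of_nonneg_right hP

theorem stmt6 (n : ℕ) (m : Fin n → ℝ) (α : ℝ) (hα : 0 < α) (f : E4 → ℝ)
    (hf : Measurable f) (hfnn : ∀ x, 0 ≤ f x)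
    (hfint : ∀ α' : ℝ, 0 < α' →
      Integrable fun x : E4 => Real.exp (-α' * ‖x‖ ^ 2) * f x) :
    ∃ c > 0, ∀ (a : Fin n → E4) (β : Fin n → ℝ), (∀ i, 1 ≤ β i) →
      ∫ x : E4, Real.exp (-α * ‖x‖ ^ 2) * f x * ∏ i, max ‖x + a i‖ (β i) ^ m i ≤
        c * ∏ i, max ‖a i‖ (β i) ^ m i :=
  stmt6_general n m α hα f hfnn hfint
end
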